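/- arXiv:1201.4249 — 2 statements merged into one kernel-verified Lean document; each statement's English description precedes it below -/
import Mathlib

section
/- Let R : ℝ → S(E) be smooth, I' ⊆ ℝ an interval, and S : I' → End(E) a solution of the Riccati equation S' + S² + R = 0. Define the expansion θ(t) := tr S(t), the vorticity ω(t) := (S(t) − S(t)†)/2, and the shear σ(t) := (S(t) + S(t)†)/2 − (θ(t)/n)·id_E, where S(t)† denotes the adjoint of S(t) with respect to ⟨·,·⟩ and n = dim E. Then the expansion, vorticity and shear satisfy the scalar Riccati (Raychaudhuri) equation θ' + θ²/n + tr(ω²) + tr(σ²) + tr(R) = 0 on I'. In particular, if S(t) is self-adjoint for all t, then ω = 0 and the equation reduces to θ' + θ²/n + tr(σ²) + tr(R) = 0. -/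
set_option synthInstance.maxHeartbeats 800000
set_option maxHeartbeats 1600000

open scoped RealInnerProductSpace

section Aux

variable {E : Type*} [NormedAddCommGroup E] [InnerProductSpace ℝ E] [FiniteDimensional ℝ E]

noncomputable def tr' (A : E →L[ℝ] E) : ℝ := LinearMap.trace ℝ E (A : E →ₗ[ℝ] E)

lemma tr'_add (A B : E →L[ℝ] E) : tr' (A + B) = tr' A + tr' B := by
  simp [tr']

lemma tr'_sub (A B : E →L[ℝ] E) : tr' (A - B) = tr' A - tr' B := by
  simp [tr']

lemma tr'_neg (A : E →L[ℝ] E) : tr' (-A) = -tr' A := by simp [tr']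

lemma tr'_smul (c : ℝ) (A : E →L[ℝ] E) : tr' (c • A) = c * tr' A := by
  simp [tr']

lemma tr'_one : tr' (1 : E →L[ℝ] E) = Module.finrank ℝ E := by
  have : ((1 : E →L[ℝ] E) : E →ₗ[ℝ] E) = (1 : E →ₗ[ℝ] E) := rfl
  rw [tr', this, LinearMap.trace_one]

lemma tr'_mul_comm (A B : E →L[ℝ] E) : tr' (A * B) = tr' (B * A) := by
  simp only [tr', ContinuousLinearMap.coe_mul]
  exact LinearMap.trace_mul_comm ℝ _ _

lemma tr'_adjoint (A : E →L[ℝ] E) :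
    tr' (ContinuousLinearMap.adjoint A) = tr' A := by
  have h : ((ContinuousLinearMap.adjoint A : E →L[ℝ] E) : E →ₗ[ℝ] E)
      = LinearMap.adjoint (A : E →ₗ[ℝ] E) := rfl
  rw [tr', h]
  let b := stdOrthonormalBasis ℝ E
  rw [tr', LinearMap.trace_eq_matrix_trace ℝ b.toBasis,
    LinearMap.trace_eq_matrix_trace ℝ b.toBasis, LinearMap.toMatrix_adjoint b b]
  simp [Matrix.trace_conjTranspose]

lemma raych_key (n : ℕ) (hn : Module.finrank ℝ E = n) (f : E →L[ℝ] E) :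
    (tr' f) ^ 2 / n
      + tr' ((2 : ℝ)⁻¹ • (f - ContinuousLinearMap.adjoint f)
          * ((2 : ℝ)⁻¹ • (f - ContinuousLinearMap.adjoint f)))
      + tr' (((2 : ℝ)⁻¹ • (f + ContinuousLinearMap.adjoint f) - (tr' f / n) • 1)
          * ((2 : ℝ)⁻¹ • (f + ContinuousLinearMap.adjoint f) - (tr' f / n) • 1))
      = tr' (f * f) := by
  set g := ContinuousLinearMap.adjoint f with hg
  rcases Nat.eq_zero_or_pos n with h0 | hpos
  · subst h0
    have : Subsingleton E := Module.finrank_zero_iff.mp hn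
    have hz : ∀ A : E →L[ℝ] E, A = 0 := fun A => by ext x; exact Subsingleton.elim _ _
    rw [hz f, hz g]
    simp [tr']
  · have hgg : tr' (g * g) = tr' (f * f) := by
      have : g * g = ContinuousLinearMap.adjoint (f * f) := (star_mul f f).symm
      rw [this, tr'_adjoint]
    have hgf : tr' (g * f) = tr' (f * g) := tr'_mul_comm _ _
    have htrg : tr' g = tr' f := tr'_adjoint f
    have hone : tr' (1 : E →L[ℝ] E) = (n : ℝ) := by rw [tr'_one, hn]
    have hnne : (n : ℝ) ≠ 0 := Nat.cast_ne_zero.mpr hpos.ne'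
    -- expand products
    have e1 : (2 : ℝ)⁻¹ • (f - g) * ((2 : ℝ)⁻¹ • (f - g))
        = ((2 : ℝ)⁻¹ * (2 : ℝ)⁻¹) • (f * f - f * g - (g * f - g * g)) := by
      simp only [smul_mul_assoc, mul_smul_comm, sub_mul, mul_sub, smul_smul]
      module
    have e2 : ((2 : ℝ)⁻¹ • (f + g) - (tr' f / n) • 1)
          * ((2 : ℝ)⁻¹ • (f + g) - (tr' f / n) • 1)
        = ((2 : ℝ)⁻¹ * (2 : ℝ)⁻¹) • (f * f + f * g + (g * f + g * g))
          - ((2 : ℝ)⁻¹ * (tr' f / n)) • (f + g)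
          - (((tr' f / n) * (2 : ℝ)⁻¹) • (f + g)
            - ((tr' f / n) * (tr' f / n)) • (1 : E →L[ℝ] E)) := by
      simp only [sub_mul, mul_sub, smul_mul_assoc, mul_smul_comm, add_mul, mul_add,
        smul_smul, one_mul, mul_one]
      module
    rw [e1, e2]
    simp only [tr'_smul, tr'_sub, tr'_add, hgg, hgf, htrg, hone]
    field_simp
    ring

end Aux

/-- **Raychaudhuri equation.** -/
theorem raychaudhuri_equation
    {E : Type*} [NormedAddCommGroup E] [InnerProductSpace ℝ E] [FiniteDimensional ℝ E]
    (n : ℕ) (hn : Module.finrank ℝ E = n)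
    (R : ℝ → E →L[ℝ] E) (hRsmooth : ContDiff ℝ (⊤ : ℕ∞) R) (hRsa : ∀ t : ℝ, IsSelfAdjoint (R t))
    (I' : Set ℝ) (hI' : I'.OrdConnected)
    (S : ℝ → E →L[ℝ] E)
    (hS : ∀ t ∈ I', HasDerivAt S (-(S t * S t) - R t) t)
    (tr : (E →L[ℝ] E) → ℝ) (htr : ∀ A : E →L[ℝ] E, tr A = LinearMap.trace ℝ E (A : E →ₗ[ℝ] E))
    (θ : ℝ → ℝ) (hθ : θ = fun t => tr (S t))
    (ω : ℝ → E →L[ℝ] E)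
    (hω : ω = fun t => (2 : ℝ)⁻¹ • (S t - ContinuousLinearMap.adjoint (S t)))
    (σ : ℝ → E →L[ℝ] E)
    (hσ : σ = fun t =>
      (2 : ℝ)⁻¹ • (S t + ContinuousLinearMap.adjoint (S t)) - (θ t / n) • 1) :
    (∀ t ∈ I',
      HasDerivAt θ (-(θ t ^ 2 / n + tr (ω t * ω t) + tr (σ t * σ t) + tr (R t))) t) ∧
    ((∀ t ∈ I', IsSelfAdjoint (S t)) →
      (∀ t ∈ I', ω t = 0) ∧
      (∀ t ∈ I', HasDerivAt θ (-(θ t ^ 2 / n + tr (σ t * σ t) + tr (R t))) t)) := by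
  have htr' : tr = fun A => tr' A := by
    funext A; rw [htr]; rfl
  subst htr' hθ hω hσ
  have main : ∀ t ∈ I',
      HasDerivAt (fun t => tr' (S t))
        (-(tr' (S t) ^ 2 / n
          + tr' ((2 : ℝ)⁻¹ • (S t - ContinuousLinearMap.adjoint (S t))
              * ((2 : ℝ)⁻¹ • (S t - ContinuousLinearMap.adjoint (S t))))
          + tr' (((2 : ℝ)⁻¹ • (S t + ContinuousLinearMap.adjoint (S t)) - (tr' (S t) / n) • 1)
              * (((2 : ℝ)⁻¹ • (S t + ContinuousLinearMap.adjoint (S t)) - (tr' (S t) / n) • 1)))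
          + tr' (R t))) t := by
    intro t ht
    set T : (E →L[ℝ] E) →L[ℝ] ℝ :=
      LinearMap.toContinuousLinearMap
        ((LinearMap.trace ℝ E).comp (ContinuousLinearMap.coeLM ℝ)) with hT
    have hTapp : ∀ A : E →L[ℝ] E, T A = tr' A := fun A => rfl
    have hD : HasDerivAt (fun t => T (S t)) (T (-(S t * S t) - R t)) t :=
      T.hasFDerivAt.comp_hasDerivAt t (hS t ht)
    have hval : T (-(S t * S t) - R t)
        = -(tr' (S t) ^ 2 / n
          + tr' ((2 : ℝ)⁻¹ • (S t - ContinuousLinearMap.adjoint (S t))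
              * ((2 : ℝ)⁻¹ • (S t - ContinuousLinearMap.adjoint (S t))))
          + tr' (((2 : ℝ)⁻¹ • (S t + ContinuousLinearMap.adjoint (S t)) - (tr' (S t) / n) • 1)
              * (((2 : ℝ)⁻¹ • (S t + ContinuousLinearMap.adjoint (S t)) - (tr' (S t) / n) • 1)))
          + tr' (R t)) := by
      rw [hTapp, tr'_sub, tr'_neg, raych_key n hn (S t)]
      ring
    rw [hval] at hD
    exact hD
  refine ⟨main, fun hsa => ⟨?_, ?_⟩⟩
  · intro t ht
    have := (hsa t ht).adjoint_eq
    simp [this]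
  · intro t ht
    have h := main t ht
    have hz : tr' ((2 : ℝ)⁻¹ • (S t - ContinuousLinearMap.adjoint (S t))
        * ((2 : ℝ)⁻¹ • (S t - ContinuousLinearMap.adjoint (S t)))) = 0 := by
      rw [(hsa t ht).adjoint_eq]
      simp [tr']
    rw [hz] at h
    convert h using 2
    ring
end

section
/- Let f, g : [a, b) → [0, ∞) be locally integrable functions that are nonzero on (a, b), and assume that the quotient f/g is nonincreasing on (a, b). Define F, G : (a, b) → (0, ∞) by F(x) = ∫_a^x f(y) dy and G(x) = ∫_a^x g(y) dy. Then F and G are continuous, and the quotient F/G is nonincreasing on (a, b). -/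
open MeasureTheory

/-- **Quotient monotonicity lemma (Gromov / Cheeger–Gromov–Taylor).**
Let `f, g : [a, b) → [0, ∞)` (with `a < b ≤ ∞`, so `b : EReal`) be locally integrable
(i.e. integrable on every compact subinterval `[a, c] ⊂ [a, b)`), nonzero on `(a, b)`,
and assume `f/g` is nonincreasing on `(a, b)`. Then `F(x) = ∫_a^x f` and
`G(x) = ∫_a^x g` are continuous and take values in `(0, ∞)` on `(a, b)`, and `F/G`
is nonincreasing on `(a, b)`. -/
theorem quotient_of_integrals_antitone
    (a : ℝ) (b : EReal) (hab : (a : EReal) < b)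
    (f g : ℝ → ℝ)
    (hf0 : ∀ x : ℝ, a ≤ x → (x : EReal) < b → 0 ≤ f x)
    (hg0 : ∀ x : ℝ, a ≤ x → (x : EReal) < b → 0 ≤ g x)
    (hfne : ∀ x : ℝ, a < x → (x : EReal) < b → f x ≠ 0)
    (hgne : ∀ x : ℝ, a < x → (x : EReal) < b → g x ≠ 0)
    (hfint : ∀ c : ℝ, a ≤ c → (c : EReal) < b → IntegrableOn f (Set.Icc a c))
    (hgint : ∀ c : ℝ, a ≤ c → (c : EReal) < b → IntegrableOn g (Set.Icc a c))
    (hquot : AntitoneOn (fun x => f x / g x) {x : ℝ | a < x ∧ (x : EReal) < b})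
    (F G : ℝ → ℝ)
    (hF : ∀ x : ℝ, F x = ∫ y in a..x, f y)
    (hG : ∀ x : ℝ, G x = ∫ y in a..x, g y) :
    ContinuousOn F {x : ℝ | a < x ∧ (x : EReal) < b} ∧
    ContinuousOn G {x : ℝ | a < x ∧ (x : EReal) < b} ∧
    (∀ x : ℝ, a < x → (x : EReal) < b → 0 < F x) ∧
    (∀ x : ℝ, a < x → (x : EReal) < b → 0 < G x) ∧
    AntitoneOn (fun x => F x / G x) {x : ℝ | a < x ∧ (x : EReal) < b} := by
  -- between a real and b there is a real
  have hbet : ∀ x : ℝ, (x : EReal) < b → ∃ c : ℝ, x < c ∧ (c : EReal) < b := by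
    intro x hx
    obtain ⟨z, hz1, hz2⟩ := exists_between hx
    have hzt : z ≠ ⊤ := fun h => absurd (h ▸ hz2) (by simp)
    have hzb : z ≠ ⊥ := fun h => absurd (h ▸ hz1) (by simp)
    refine ⟨z.toReal, ?_, ?_⟩
    · exact_mod_cast (EReal.coe_toReal hzt hzb) ▸ hz1
    · rw [EReal.coe_toReal hzt hzb]; exact hz2
  -- interval integrability
  have hfii : ∀ u v : ℝ, a ≤ u → u ≤ v → (v : EReal) < b →
      IntervalIntegrable f volume u v := by
    intro u v hau huv hvb
    have h1 : IntegrableOn f (Set.Icc u v) :=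
      (hfint v (hau.trans huv) hvb).mono_set (Set.Icc_subset_Icc hau le_rfl)
    exact (Set.uIcc_of_le huv ▸ h1).intervalIntegrable
  have hgii : ∀ u v : ℝ, a ≤ u → u ≤ v → (v : EReal) < b →
      IntervalIntegrable g volume u v := by
    intro u v hau huv hvb
    have h1 : IntegrableOn g (Set.Icc u v) :=
      (hgint v (hau.trans huv) hvb).mono_set (Set.Icc_subset_Icc hau le_rfl)
    exact (Set.uIcc_of_le huv ▸ h1).intervalIntegrable
  -- positivity of g on (a,b)
  have hgpos : ∀ t : ℝ, a < t → (t : EReal) < b → 0 < g t := fun t h1 h2 =>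
    lt_of_le_of_ne (hg0 t h1.le h2) (Ne.symm (hgne t h1 h2))
  have hfpos : ∀ t : ℝ, a < t → (t : EReal) < b → 0 < f t := fun t h1 h2 =>
    lt_of_le_of_ne (hf0 t h1.le h2) (Ne.symm (hfne t h1 h2))
  -- continuity
  have hcont : ∀ (h H : ℝ → ℝ), (∀ c : ℝ, a ≤ c → (c : EReal) < b →
      IntegrableOn h (Set.Icc a c)) → (∀ x : ℝ, H x = ∫ y in a..x, h y) →
      ContinuousOn H {x : ℝ | a < x ∧ (x : EReal) < b} := by
    intro h H hint hH x hx
    obtain ⟨c, hxc, hcb⟩ := hbet x hx.2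
    have hac : a ≤ c := (hx.1.trans hxc).le
    have hco : ContinuousOn (fun t => ∫ y in a..t, h y) (Set.uIcc a c) :=
      intervalIntegral.continuousOn_primitive_interval
        (by rw [Set.uIcc_of_le hac]; exact hint c hac hcb)
    have hco' : ContinuousOn H (Set.uIcc a c) := hco.congr fun t _ => hH t
    have hmem : Set.uIcc a c ∈ nhds x := by
      rw [Set.uIcc_of_le hac]; exact Icc_mem_nhds hx.1 hxc
    exact (hco'.continuousAt hmem).continuousWithinAt
  -- positivity of F, G
  have hpos : ∀ (h H : ℝ → ℝ), (∀ t : ℝ, a < t → (t : EReal) < b → 0 < h t) →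
      (∀ u v : ℝ, a ≤ u → u ≤ v → (v : EReal) < b → IntervalIntegrable h volume u v) →
      (∀ x : ℝ, H x = ∫ y in a..x, h y) →
      ∀ x : ℝ, a < x → (x : EReal) < b → 0 < H x := by
    intro h H hhpos hii hH x hax hxb
    rw [hH x]
    refine intervalIntegral.intervalIntegral_pos_of_pos_on
      (hii a x le_rfl hax.le hxb) (fun t ht => ?_) hax
    exact hhpos t ht.1 (lt_trans (by exact_mod_cast ht.2) hxb)
  have hFpos := hpos f F hfpos hfii hF
  have hGpos := hpos g G hgpos hgii hG
  refine ⟨hcont f F hfint hF, hcont g G hgint hG, hFpos, hGpos, ?_⟩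
  -- the antitone statement
  intro x hx y hy hxy
  simp only [Set.mem_setOf_eq] at hx hy
  have hgx := hgpos x hx.1 hx.2
  have hfx := hfpos x hx.1 hx.2
  set c : ℝ := f x / g x with hc
  have hcpos : 0 < c := div_pos hfx hgx
  -- key 1 : c * G x ≤ F x
  have key1 : c * G x ≤ F x := by
    rw [hF, hG, ← intervalIntegral.integral_const_mul]
    refine intervalIntegral.integral_mono_ae_restrict hx.1.le
      ((hgii a x le_rfl hx.1.le hx.2).const_mul c) (hfii a x le_rfl hx.1.le hx.2) ?_
    have hne : ∀ᵐ t ∂(volume.restrict (Set.Icc a x)), t ≠ a := by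
      refine ae_restrict_of_ae ?_
      refine ae_iff.mpr ?_
      simpa using Real.volume_singleton (x := a)
    filter_upwards [hne, ae_restrict_mem measurableSet_Icc] with t hta ht
    have h1 : a < t := lt_of_le_of_ne ht.1 (Ne.symm hta)
    have h2 : (t : EReal) < b := lt_of_le_of_lt (by exact_mod_cast ht.2) hx.2
    have hgt := hgpos t h1 h2
    have hq : f x / g x ≤ f t / g t := hquot ⟨h1, h2⟩ hx ht.2
    exact (le_div_iff₀ hgt).mp hq
  -- key 2 : ∫ x..y f ≤ c * ∫ x..y g
  have hay : a ≤ y := (hx.1.trans_le hxy).le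
  have key2 : (∫ t in x..y, f t) ≤ c * ∫ t in x..y, g t := by
    rw [← intervalIntegral.integral_const_mul]
    refine intervalIntegral.integral_mono_on hxy
      (hfii x y hx.1.le hxy hy.2) ((hgii x y hx.1.le hxy hy.2).const_mul c)
      (fun t ht => ?_)
    have h1 : a < t := lt_of_lt_of_le hx.1 ht.1
    have h2 : (t : EReal) < b := lt_of_le_of_lt (by exact_mod_cast ht.2) hy.2
    have hgt := hgpos t h1 h2
    have hq : f t / g t ≤ f x / g x := hquot hx ⟨h1, h2⟩ ht.1
    exact (div_le_iff₀ hgt).mp hq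
  have hIg : 0 ≤ ∫ t in x..y, g t :=
    intervalIntegral.integral_nonneg hxy fun t ht =>
      hg0 t (hx.1.le.trans ht.1) (lt_of_le_of_lt (by exact_mod_cast ht.2) hy.2)
  have hsplitF : F y = F x + ∫ t in x..y, f t := by
    rw [hF, hF,
      intervalIntegral.integral_add_adjacent_intervals (hfii a x le_rfl hx.1.le hx.2)
        (hfii x y hx.1.le hxy hy.2)]
  have hsplitG : G y = G x + ∫ t in x..y, g t := by
    rw [hG, hG,
      intervalIntegral.integral_add_adjacent_intervals (hgii a x le_rfl hx.1.le hx.2)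
        (hgii x y hx.1.le hxy hy.2)]
  have hGx := hGpos x hx.1 hx.2
  have hGy := hGpos y (hx.1.trans_le hxy) hy.2
  rw [div_le_div_iff₀ hGy hGx, hsplitF, hsplitG]
  nlinarith [mul_le_mul_of_nonneg_right key2 hGx.le,
    mul_le_mul_of_nonneg_right key1 hIg]
end
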